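/- arXiv:2211.01468 — 5 statements merged into one kernel-verified Lean document; each statement's English description precedes it below -/
import Mathlib

section
/- In a connected weighted graph, the effective resistance between any two distinct vertices u and v satisfies R(u,v) >= (1/2)(1/d_u + 1/d_v), where d_u, d_v are the weighted degrees of u and v. -/
/-!
Write `b = 1_u - 1_v` and `d` for the weighted degrees. Since the kernel of `L` consists of the
constants and `b` sums to zero, the Moore–Penrose identities give `L (L⁺ b) = b`. For a symmetric
positive semidefinite `L` and `L y = b`, expanding `0 ≤ (x - y)ᵀ L (x - y)` gives the Dirichlet
principle `b ⬝ᵥ y ≥ 2 (x ⬝ᵥ b) - xᵀ L x` for every potential `x`. Take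
`x = a 1_u - c 1_v` with `a d_u = c d_v = 1/2`: as `A u v ≤ d_u` and `A v u ≤ d_v`,
`xᵀ L x ≤ (a + c)(a d_u + c d_v) = a + c = x ⬝ᵥ b`, so `R(u,v) ≥ a + c = (1/2)(1/d_u + 1/d_v)`.
-/

open Matrix BigOperators

namespace Matrix

variable {ι : Type*} [Fintype ι]

theorem two_mul_dotProduct_sub_le_of_mulVec_eq {L : Matrix ι ι ℝ} (hL : L.IsSymm)
    (hpsd : ∀ z, 0 ≤ z ⬝ᵥ L *ᵥ z) {b y : ι → ℝ} (hy : L *ᵥ y = b) (x : ι → ℝ) :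
    2 * (x ⬝ᵥ b) - x ⬝ᵥ L *ᵥ x ≤ b ⬝ᵥ y := by
  have hyx : y ⬝ᵥ L *ᵥ x = x ⬝ᵥ b := by
    rw [dotProduct_mulVec, ← mulVec_transpose, hL.eq, hy, dotProduct_comm]
  have h := hpsd (x - y)
  simp only [mulVec_sub, dotProduct_sub, sub_dotProduct, hy, hyx, dotProduct_comm y b] at h
  linarith

theorem mulVec_mulVec_eq_self_of_sum_eq_zero [Nonempty ι] {L Lp : Matrix ι ι ℝ} (hL : L.IsSymm)
    (hsum : ∀ x, ∑ i, (L *ᵥ x) i = 0) (hker : ∀ x, L *ᵥ x = 0 → ∃ c, ∀ i, x i = c)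
    (h₁ : L * Lp * L = L) (h₃ : (L * Lp).IsSymm) {b : ι → ℝ} (hb : ∑ i, b i = 0) :
    L *ᵥ Lp *ᵥ b = b := by
  have hLLLp : L * (L * Lp) = L := by
    simpa only [transpose_mul, hL.eq, h₃.eq] using congrArg transpose h₁
  set w := b - L *ᵥ Lp *ᵥ b
  have hw : L *ᵥ w = 0 := by
    rw [mulVec_sub, mulVec_mulVec, mulVec_mulVec, Matrix.mul_assoc, hLLLp, sub_self]
  obtain ⟨c, hc⟩ := hker w hw
  have hw₀ : ∑ i, w i = 0 := by
    simp only [w, Pi.sub_apply, Finset.sum_sub_distrib, hb, hsum, sub_self]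
  have hc₀ : c = 0 := by
    simpa [hc, Finset.card_univ, Fintype.card_ne_zero] using hw₀
  exact (sub_eq_zero.mp (funext fun i => (hc i).trans hc₀)).symm

section Laplacian

variable [DecidableEq ι]

def laplacian (A : Matrix ι ι ℝ) : Matrix ι ι ℝ :=
  diagonal (fun i => ∑ j, A i j) - A

variable {A : Matrix ι ι ℝ}

theorem IsSymm.laplacian (hA : A.IsSymm) : A.laplacian.IsSymm := by
  simp only [Matrix.laplacian, IsSymm, transpose_sub, diagonal_transpose, hA.eq]

theorem laplacian_mulVec_apply (x : ι → ℝ) (i : ι) :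
    (A.laplacian *ᵥ x) i = ∑ j, A i j * (x i - x j) := by
  rw [Matrix.laplacian, sub_mulVec, Pi.sub_apply, mulVec_diagonal]
  simp only [mulVec, dotProduct, mul_sub, Finset.sum_sub_distrib, Finset.sum_mul]

theorem sum_laplacian_mulVec (hA : A.IsSymm) (x : ι → ℝ) : ∑ i, (A.laplacian *ᵥ x) i = 0 := by
  have h := dotProduct_mulVec 1 A.laplacian x
  have hone : A.laplacian *ᵥ 1 = 0 := funext fun i => by simp [laplacian_mulVec_apply]
  rw [← mulVec_transpose, hA.laplacian.eq, hone, zero_dotProduct] at h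
  simpa [dotProduct] using h

theorem two_mul_dotProduct_laplacian_mulVec (hA : A.IsSymm) (x : ι → ℝ) :
    2 * (x ⬝ᵥ A.laplacian *ᵥ x) = ∑ i, ∑ j, A i j * (x i - x j) ^ 2 := by
  have h : x ⬝ᵥ A.laplacian *ᵥ x = ∑ i, ∑ j, A i j * (x i * (x i - x j)) := by
    simp only [dotProduct, laplacian_mulVec_apply, Finset.mul_sum]
    exact Finset.sum_congr rfl fun i _ => Finset.sum_congr rfl fun j _ => by ring
  have h' : x ⬝ᵥ A.laplacian *ᵥ x = ∑ i, ∑ j, A i j * (x j * (x j - x i)) := by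
    rw [h, Finset.sum_comm]
    simp only [hA.apply]
  calc 2 * (x ⬝ᵥ A.laplacian *ᵥ x)
      = ∑ i, ∑ j, (A i j * (x i * (x i - x j)) + A i j * (x j * (x j - x i))) := by
        rw [two_mul]; nth_rw 1 [h]; rw [h']; simp only [Finset.sum_add_distrib]
    _ = ∑ i, ∑ j, A i j * (x i - x j) ^ 2 := by
        congr! 2; ring

theorem dotProduct_laplacian_mulVec_nonneg (hA : A.IsSymm) (hA₀ : ∀ i j, 0 ≤ A i j)
    (x : ι → ℝ) : 0 ≤ x ⬝ᵥ A.laplacian *ᵥ x := by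
  have h : 0 ≤ ∑ i, ∑ j, A i j * (x i - x j) ^ 2 :=
    Finset.sum_nonneg fun i _ => Finset.sum_nonneg fun j _ => mul_nonneg (hA₀ i j) (sq_nonneg _)
  linarith [two_mul_dotProduct_laplacian_mulVec hA x]

theorem single_sub_single_dotProduct_mulVec (M : Matrix ι ι ℝ) (u v : ι) (a c : ℝ) :
    (Pi.single u a - Pi.single v c) ⬝ᵥ M *ᵥ (Pi.single u a - Pi.single v c)
      = a ^ 2 * M u u - a * c * (M u v + M v u) + c ^ 2 * M v v := by
  simp only [mulVec_sub, mulVec_single, dotProduct_sub, sub_dotProduct, single_dotProduct,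
    col_apply, op_smul_eq_mul, Pi.smul_apply]
  ring

theorem single_sub_single_dotProduct_laplacian_mulVec_le (hA₀ : ∀ i j, 0 ≤ A i j) {u v : ι}
    (huv : u ≠ v) {a c : ℝ} (ha : 0 ≤ a) (hc : 0 ≤ c) :
    (Pi.single u a - Pi.single v c) ⬝ᵥ A.laplacian *ᵥ (Pi.single u a - Pi.single v c)
      ≤ (a + c) * (a * ∑ j, A u j + c * ∑ j, A v j) := by
  have huu : A.laplacian u u = ∑ j, A u j - A u u := by simp [Matrix.laplacian]
  have hvv : A.laplacian v v = ∑ j, A v j - A v v := by simp [Matrix.laplacian]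
  have huv' : A.laplacian u v = - A u v := by simp [Matrix.laplacian, huv]
  have hvu' : A.laplacian v u = - A v u := by simp [Matrix.laplacian, huv.symm]
  have hAuv : A u v ≤ ∑ j, A u j := Finset.single_le_sum (fun j _ => hA₀ u j) (Finset.mem_univ v)
  have hAvu : A v u ≤ ∑ j, A v j := Finset.single_le_sum (fun j _ => hA₀ v j) (Finset.mem_univ u)
  rw [single_sub_single_dotProduct_mulVec, huu, hvv, huv', hvu']
  nlinarith [hA₀ u u, hA₀ v v, mul_nonneg ha hc, sq_nonneg a, sq_nonneg c]

end Laplacian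

end Matrix

theorem effective_resistance_lower_bound_general (n : ℕ) (A : Matrix (Fin n) (Fin n) ℝ)
    (hsym : A.IsSymm) (hnonneg : ∀ i j, 0 ≤ A i j)
    (hdpos : ∀ i, 0 < ∑ j, A i j)
    (L : Matrix (Fin n) (Fin n) ℝ)
    (hL : L = Matrix.diagonal (fun i => ∑ j, A i j) - A)
    (hconn : ∀ x : Fin n → ℝ, L.mulVec x = 0 → ∃ c : ℝ, ∀ i, x i = c)
    (Lp : Matrix (Fin n) (Fin n) ℝ)
    (hmp1 : L * Lp * L = L)
    (hmp3 : (L * Lp).IsSymm)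
    (u v : Fin n) (huv : u ≠ v) :
    (1 / 2) * (1 / (∑ j, A u j) + 1 / (∑ j, A v j))
      ≤ (Pi.single u 1 - Pi.single v 1) ⬝ᵥ
          Lp.mulVec (Pi.single u 1 - Pi.single v 1) := by
  obtain rfl : L = A.laplacian := hL
  have : Nonempty (Fin n) := ⟨u⟩
  set b : Fin n → ℝ := Pi.single u 1 - Pi.single v 1
  have hb : ∑ i, b i = 0 := by simp [b, Finset.sum_sub_distrib]
  have hLy := mulVec_mulVec_eq_self_of_sum_eq_zero hsym.laplacian (sum_laplacian_mulVec hsym)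
    hconn hmp1 hmp3 hb
  set a := 1 / (2 * ∑ j, A u j) with ha_def
  set c := 1 / (2 * ∑ j, A v j) with hc_def
  have ha : a * ∑ j, A u j = 1 / 2 := by rw [ha_def]; field_simp [(hdpos u).ne']
  have hc : c * ∑ j, A v j = 1 / 2 := by rw [hc_def]; field_simp [(hdpos v).ne']
  have hxb : (Pi.single u a - Pi.single v c) ⬝ᵥ b = a + c := by
    simp [b, dotProduct_sub, huv, huv.symm]
  have hxLx := single_sub_single_dotProduct_laplacian_mulVec_le hnonneg huv
    (div_pos one_pos (mul_pos two_pos (hdpos u))).le (div_pos one_pos (mul_pos two_pos (hdpos v))).le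
  have hdirichlet := two_mul_dotProduct_sub_le_of_mulVec_eq hsym.laplacian
    (dotProduct_laplacian_mulVec_nonneg hsym hnonneg) hLy (Pi.single u a - Pi.single v c)
  rw [ha, hc] at hxLx
  rw [hxb] at hdirichlet
  have hlhs : 1 / 2 * (1 / (∑ j, A u j) + 1 / (∑ j, A v j)) = a + c := by
    rw [ha_def, hc_def]; ring
  linarith

/-- in a connected weighted graph, the effective resistance
`R(u,v) = (1_u - 1_v)ᵀ L⁺ (1_u - 1_v)` between distinct vertices `u, v` satisfies
`R(u,v) ≥ (1/2)(1/d_u + 1/d_v)`.  The pseudoinverse `L⁺` is characterized by the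
Moore–Penrose axioms. -/
theorem effective_resistance_lower_bound (n : ℕ) (A : Matrix (Fin n) (Fin n) ℝ)
    (hsym : A.IsSymm) (hnonneg : ∀ i j, 0 ≤ A i j) (hloop : ∀ i, A i i = 0)
    (hdpos : ∀ i, 0 < ∑ j, A i j)
    (L : Matrix (Fin n) (Fin n) ℝ)
    (hL : L = Matrix.diagonal (fun i => ∑ j, A i j) - A)
    (hconn : ∀ x : Fin n → ℝ, L.mulVec x = 0 → ∃ c : ℝ, ∀ i, x i = c)
    (Lp : Matrix (Fin n) (Fin n) ℝ)
    (hmp1 : L * Lp * L = L) (hmp2 : Lp * L * Lp = Lp)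
    (hmp3 : (L * Lp).IsSymm) (hmp4 : (Lp * L).IsSymm)
    (u v : Fin n) (huv : u ≠ v) :
    (1 / 2) * (1 / (∑ j, A u j) + 1 / (∑ j, A v j))
      ≤ (Pi.single u 1 - Pi.single v 1) ⬝ᵥ
          Lp.mulVec (Pi.single u 1 - Pi.single v 1) :=
  effective_resistance_lower_bound_general n A hsym hnonneg hdpos L hL hconn Lp hmp1 hmp3 u v huv
end

section
/- For a connected weighted graph, on the subspace orthogonal to the all-ones vector, (1/2) D^{-1} ⪯ L^+, i.e., for every vector x orthogonal to the kernel of L, x^T L^+ x >= (1/2) x^T D^{-1} x. -/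
open Matrix BigOperators

/-- for a connected weighted graph, on the subspace orthogonal to the
all-ones vector we have `(1/2) D⁻¹ ⪯ L⁺`:
for every `x` with `⟨x, 1⟩ = 0`, `xᵀ L⁺ x ≥ (1/2) xᵀ D⁻¹ x`. -/
theorem half_dinv_le_pseudoinverse (n : ℕ) (A : Matrix (Fin n) (Fin n) ℝ)
    (hsym : A.IsSymm) (hnonneg : ∀ i j, 0 ≤ A i j) (hloop : ∀ i, A i i = 0)
    (hdpos : ∀ i, 0 < ∑ j, A i j)
    (L : Matrix (Fin n) (Fin n) ℝ)
    (hL : L = Matrix.diagonal (fun i => ∑ j, A i j) - A)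
    (hker : ∀ x : Fin n → ℝ, L.mulVec x = 0 → ∃ c : ℝ, ∀ i, x i = c)
    (Lp : Matrix (Fin n) (Fin n) ℝ)
    (hmp1 : L * Lp * L = L) (hmp2 : Lp * L * Lp = Lp)
    (hmp3 : (L * Lp).IsSymm) (hmp4 : (Lp * L).IsSymm) :
    ∀ x : Fin n → ℝ, (∑ i, x i = 0) →
      (1 / 2) * (x ⬝ᵥ (Matrix.diagonal (fun i => (∑ j, A i j)⁻¹)).mulVec x)
        ≤ x ⬝ᵥ Lp.mulVec x := by
  intro x hx
  set d : Fin n → ℝ := fun i => ∑ j, A i j with hd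
  -- symmetry of L
  have hLsym : L.IsSymm := by
    rw [hL, Matrix.IsSymm, Matrix.transpose_sub, Matrix.diagonal_transpose, hsym]
  -- symmetric matrices can be moved across the dot product
  have symdot : ∀ M : Matrix (Fin n) (Fin n) ℝ, M.IsSymm →
      ∀ a b : Fin n → ℝ, (M.mulVec a) ⬝ᵥ b = a ⬝ᵥ (M.mulVec b) := by
    intro M hM a b
    rw [dotProduct_comm, Matrix.dotProduct_mulVec, ← Matrix.mulVec_transpose,
      hM.eq, dotProduct_comm]
  -- swap lemma
  have hswap : ∀ f : Fin n → ℝ, (∑ i, ∑ j, A i j * f j) = ∑ i, ∑ j, A i j * f i := by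
    intro f
    rw [Finset.sum_comm]
    exact Finset.sum_congr rfl fun i _ => Finset.sum_congr rfl fun j _ => by
      rw [hsym.apply i j]
  -- mulVec of L
  have hmv : ∀ (z : Fin n → ℝ) (i : Fin n),
      L.mulVec z i = ∑ j, A i j * (z i - z j) := by
    intro z i
    have h1 : L.mulVec z i = (Matrix.diagonal d).mulVec z i - A.mulVec z i := by
      rw [hL, Matrix.sub_mulVec]; rfl
    have h2 : ∑ j, A i j * (z i - z j) = (∑ j, A i j * z i) - ∑ j, A i j * z j := by
      rw [← Finset.sum_sub_distrib]
      exact Finset.sum_congr rfl fun j _ => by ring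
    rw [h1, h2, ← Finset.sum_mul, Matrix.mulVec_diagonal]
    rfl
  -- quadratic form of L
  have quad : ∀ z : Fin n → ℝ,
      z ⬝ᵥ L.mulVec z = (1/2) * ∑ i, ∑ j, A i j * (z i - z j)^2 := by
    intro z
    have e1 : z ⬝ᵥ L.mulVec z
        = (∑ i, ∑ j, A i j * z i ^ 2) - ∑ i, ∑ j, A i j * z i * z j := by
      simp only [dotProduct, hmv, Finset.mul_sum]
      rw [← Finset.sum_sub_distrib]
      refine Finset.sum_congr rfl fun i _ => ?_
      rw [← Finset.sum_sub_distrib]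
      exact Finset.sum_congr rfl fun j _ => by ring
    have e2 : ∑ i, ∑ j, A i j * (z i - z j)^2
        = ((∑ i, ∑ j, A i j * z i ^ 2) + ∑ i, ∑ j, A i j * z j ^ 2)
          - 2 * ∑ i, ∑ j, A i j * z i * z j := by
      have e4 : (2:ℝ) * ∑ i, ∑ j, A i j * z i * z j
          = ∑ i, ∑ j, 2 * (A i j * z i * z j) := by
        rw [Finset.mul_sum]
        exact Finset.sum_congr rfl fun i _ => Finset.mul_sum _ _ _
      rw [e4, ← Finset.sum_add_distrib, ← Finset.sum_sub_distrib]
      refine Finset.sum_congr rfl fun i _ => ?_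
      rw [← Finset.sum_add_distrib, ← Finset.sum_sub_distrib]
      exact Finset.sum_congr rfl fun j _ => by ring
    have e3 : (∑ i, ∑ j, A i j * z j ^ 2) = ∑ i, ∑ j, A i j * z i ^ 2 :=
      hswap (fun t => z t ^ 2)
    rw [e1, e2, e3]
    ring
  have quad_nonneg : ∀ z : Fin n → ℝ, 0 ≤ z ⬝ᵥ L.mulVec z := by
    intro z
    rw [quad z]
    have : 0 ≤ ∑ i, ∑ j, A i j * (z i - z j)^2 :=
      Finset.sum_nonneg fun i _ => Finset.sum_nonneg fun j _ =>
        mul_nonneg (hnonneg i j) (sq_nonneg _)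
    linarith
  have pair_symm : ∀ y z : Fin n → ℝ, z ⬝ᵥ L.mulVec y = y ⬝ᵥ L.mulVec z := by
    intro y z
    rw [← symdot L hLsym z y, dotProduct_comm]
  -- Cauchy-Schwarz for the PSD form L
  have cs : ∀ y z : Fin n → ℝ,
      (z ⬝ᵥ L.mulVec y)^2 ≤ (z ⬝ᵥ L.mulVec z) * (y ⬝ᵥ L.mulVec y) := by
    intro y z
    have h := discrim_le_zero (a := y ⬝ᵥ L.mulVec y) (b := 2 * (z ⬝ᵥ L.mulVec y))
      (c := z ⬝ᵥ L.mulVec z) ?_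
    · rw [discrim] at h; nlinarith [h]
    · intro t
      have expand : (z + t • y) ⬝ᵥ L.mulVec (z + t • y)
          = (y ⬝ᵥ L.mulVec y) * (t * t) + 2 * (z ⬝ᵥ L.mulVec y) * t
            + z ⬝ᵥ L.mulVec z := by
        rw [Matrix.mulVec_add, Matrix.mulVec_smul]
        simp only [dotProduct_add, add_dotProduct,
          dotProduct_smul, smul_dotProduct, smul_eq_mul]
        rw [pair_symm z y]
        ring
      rw [← expand]
      exact quad_nonneg _
  -- zero quadratic form implies in kernel
  have ker_of_quad : ∀ w : Fin n → ℝ, w ⬝ᵥ L.mulVec w = 0 → L.mulVec w = 0 := by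
    intro w hw
    have hsum : ∑ i, ∑ j, A i j * (w i - w j)^2 = 0 := by
      rw [quad w] at hw; linarith
    have hterm : ∀ i ∈ Finset.univ, ∀ j ∈ Finset.univ, A i j * ((w i - w j))^2 = 0 := by
      have h1 := (Finset.sum_eq_zero_iff_of_nonneg (fun i _ =>
        Finset.sum_nonneg fun j _ => mul_nonneg (hnonneg i j) (sq_nonneg _))).mp hsum
      intro i hi j hj
      exact (Finset.sum_eq_zero_iff_of_nonneg (fun j _ =>
        mul_nonneg (hnonneg i j) (sq_nonneg _))).mp (h1 i hi) j hj
    funext i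
    rw [hmv w i]
    simp only [Pi.zero_apply]
    apply Finset.sum_eq_zero
    intro j hj
    rcases mul_eq_zero.mp (hterm i (Finset.mem_univ i) j hj) with h | h
    · rw [h, zero_mul]
    · rw [sq_eq_zero_iff.mp h, mul_zero]
  -- L annihilates constants
  have hL1 : L.mulVec (fun _ => (1:ℝ)) = 0 := by
    funext i
    rw [hmv]
    simp
  -- sum of entries of (L * Lp).mulVec x is zero
  have hsumP : ∑ i, (L * Lp).mulVec x i = 0 := by
    have h1 : ∑ i, (L * Lp).mulVec x i = (fun _ => (1:ℝ)) ⬝ᵥ (L * Lp).mulVec x := by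
      simp [dotProduct]
    rw [h1, ← Matrix.mulVec_mulVec, ← symdot L hLsym, hL1]
    simp
  -- the projection identity : (L * Lp).mulVec x = x
  have hproj : (L * Lp).mulVec x = x := by
    set w : Fin n → ℝ := x - (L * Lp).mulVec x with hwdef
    have horth : ∀ v : Fin n → ℝ, w ⬝ᵥ L.mulVec v = 0 := by
      intro v
      have h0 : w ⬝ᵥ L.mulVec v = x ⬝ᵥ L.mulVec v - ((L * Lp).mulVec x) ⬝ᵥ L.mulVec v := by
        rw [hwdef]; simp [sub_dotProduct]
      rw [h0]
      have h2 : ((L * Lp).mulVec x) ⬝ᵥ L.mulVec v = x ⬝ᵥ L.mulVec v := by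
        rw [symdot (L * Lp) hmp3 x (L.mulVec v), Matrix.mulVec_mulVec, hmp1]
      rw [h2]
      ring
    have hwL : L.mulVec w = 0 := ker_of_quad w (horth w)
    obtain ⟨c, hc⟩ := hker w hwL
    have hsumw : ∑ i, w i = 0 := by
      rw [hwdef]
      simp only [Pi.sub_apply, Finset.sum_sub_distrib]
      rw [hx, hsumP]
      ring
    have hc0 : ∀ i, w i = 0 := by
      intro i
      have hn : 0 < n := i.pos
      have h0 : (n:ℝ) * c = 0 := by
        have hs := hsumw
        rw [Finset.sum_congr rfl fun i (_ : i ∈ Finset.univ) => hc i] at hs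
        simpa [Finset.card_univ, nsmul_eq_mul] using hs
      have hn' : (n:ℝ) ≠ 0 := Nat.cast_ne_zero.mpr hn.ne'
      rcases mul_eq_zero.mp h0 with h | h
      · exact absurd h hn'
      · rw [hc i, h]
    have hw0 : w = 0 := funext hc0
    rw [hwdef] at hw0
    exact (sub_eq_zero.mp hw0).symm
  -- main computation
  set y : Fin n → ℝ := Lp.mulVec x with hy
  have hLy : L.mulVec y = x := by
    rw [hy, Matrix.mulVec_mulVec, hproj]
  set z : Fin n → ℝ := fun i => (d i)⁻¹ * x i with hz
  set S : ℝ := x ⬝ᵥ (Matrix.diagonal (fun i => (d i)⁻¹)).mulVec x with hS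
  set T : ℝ := x ⬝ᵥ y with hT
  have hSform : S = ∑ i, (d i)⁻¹ * (x i)^2 := by
    rw [hS]
    simp only [dotProduct, Matrix.mulVec_diagonal]
    exact Finset.sum_congr rfl fun i _ => by ring
  have hSnn : 0 ≤ S := by
    rw [hSform]
    exact Finset.sum_nonneg fun i _ =>
      mul_nonneg (inv_nonneg.mpr (hdpos i).le) (sq_nonneg _)
  have hzx : z ⬝ᵥ L.mulVec y = S := by
    rw [hLy, hSform]
    simp only [dotProduct, hz]
    exact Finset.sum_congr rfl fun i _ => by ring
  -- zᵀ L z ≤ 2 S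
  have hzLz : z ⬝ᵥ L.mulVec z ≤ 2 * S := by
    rw [quad z]
    have step : ∀ i ∈ Finset.univ, ∀ j ∈ Finset.univ,
        A i j * (z i - z j)^2 ≤ A i j * (2 * (z i)^2 + 2 * (z j)^2) := by
      intro i _ j _
      apply mul_le_mul_of_nonneg_left _ (hnonneg i j)
      nlinarith [sq_nonneg (z i + z j)]
    have h1 : ∑ i, ∑ j, A i j * (z i - z j)^2
        ≤ ∑ i, ∑ j, A i j * (2 * (z i)^2 + 2 * (z j)^2) :=
      Finset.sum_le_sum fun i hi => Finset.sum_le_sum fun j hj => step i hi j hj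
    have h2 : ∑ i, ∑ j, A i j * (2 * (z i)^2 + 2 * (z j)^2)
        = (∑ i, ∑ j, A i j * (2 * (z i)^2)) + ∑ i, ∑ j, A i j * (2 * (z j)^2) := by
      simp only [← Finset.sum_add_distrib]
      exact Finset.sum_congr rfl fun i _ => Finset.sum_congr rfl fun j _ => by ring
    have h3 : (∑ i, ∑ j, A i j * (2 * (z j)^2)) = ∑ i, ∑ j, A i j * (2 * (z i)^2) :=
      hswap (fun t => 2 * (z t)^2)
    have h4 : (∑ i, ∑ j, A i j * (2 * (z i)^2)) = 2 * S := by
      rw [hSform, Finset.mul_sum]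
      refine Finset.sum_congr rfl fun i _ => ?_
      rw [← Finset.sum_mul]
      have hdi : d i ≠ 0 := (hdpos i).ne'
      show d i * (2 * ((d i)⁻¹ * x i)^2) = 2 * ((d i)⁻¹ * x i ^ 2)
      field_simp
    linarith
  -- T = yᵀ L y
  have hTy : T = y ⬝ᵥ L.mulVec y := by
    rw [hT, ← hLy]
    exact symdot L hLsym y y
  have hTnn : 0 ≤ T := hTy ▸ quad_nonneg y
  -- Cauchy-Schwarz
  have hCS : S^2 ≤ (2 * S) * T := by
    have h := cs y z
    rw [hzx, ← hTy] at h
    nlinarith [quad_nonneg z, hzLz, hTnn]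
  nlinarith [hCS, hSnn, hTnn]
end

section
/- The second smallest eigenvalue of the Schur complement of a connected weighted graph Laplacian onto a vertex subset C, normalized by the original degrees restricted to C, is at least the second smallest eigenvalue of the normalized Laplacian of the full graph: λ₂(D_C^{-1/2} Sc(L, C) D_C^{-1/2}) >= λ₂(D^{-1/2} L D^{-1/2}). -/
open Matrix BigOperators

/-- The second smallest eigenvalue of a symmetric matrix, via the
Courant–Fischer min-max characterization. -/
noncomputable def lambda2 {ι : Type*} [Fintype ι] (M : Matrix ι ι ℝ) : ℝ :=
  ⨅ U : {U : Submodule ℝ (ι → ℝ) // Module.finrank ℝ U = 2},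
    ⨆ x : {x : ι → ℝ // x ∈ U.1 ∧ x ≠ 0},
      (x.1 ⬝ᵥ M.mulVec x.1) / (x.1 ⬝ᵥ x.1)


lemma abs_dot_le {ι : Type*} [Fintype ι] (M : Matrix ι ι ℝ) (x : ι → ℝ) :
    |x ⬝ᵥ M.mulVec x| ≤ (∑ i, ∑ j, |M i j|) * (x ⬝ᵥ x) := by
  have hxx : ∀ i j : ι, |x i * x j| ≤ x ⬝ᵥ x := by
    intro i j
    have h1 : x i ^ 2 ≤ x ⬝ᵥ x := by
      rw [dotProduct]
      have h := Finset.single_le_sum (f := fun k => x k * x k)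
        (fun k _ => mul_self_nonneg (x k)) (Finset.mem_univ i)
      nlinarith
    have h2 : x j ^ 2 ≤ x ⬝ᵥ x := by
      rw [dotProduct]
      have h := Finset.single_le_sum (f := fun k => x k * x k)
        (fun k _ => mul_self_nonneg (x k)) (Finset.mem_univ j)
      nlinarith
    have : |x i * x j| ≤ (x i ^ 2 + x j ^ 2) / 2 := by
      rw [abs_mul]
      nlinarith [abs_nonneg (x i), abs_nonneg (x j), sq_abs (x i), sq_abs (x j),
        sq_nonneg (|x i| - |x j|)]
    linarith
  calc |x ⬝ᵥ M.mulVec x| = |∑ i, ∑ j, x i * M i j * x j| := by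
        simp [dotProduct, Matrix.mulVec, Finset.mul_sum, mul_assoc, mul_comm, mul_left_comm]
    _ ≤ ∑ i, ∑ j, |x i * M i j * x j| := by
        refine (Finset.abs_sum_le_sum_abs _ _).trans ?_
        exact Finset.sum_le_sum fun i _ => Finset.abs_sum_le_sum_abs _ _
    _ ≤ ∑ i, ∑ j, |M i j| * (x ⬝ᵥ x) := by
        refine Finset.sum_le_sum fun i _ => Finset.sum_le_sum fun j _ => ?_
        have : |x i * M i j * x j| = |M i j| * |x i * x j| := by
          rw [← abs_mul]; ring_nf
        rw [this]
        exact mul_le_mul_of_nonneg_left (hxx i j) (abs_nonneg _)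
    _ = (∑ i, ∑ j, |M i j|) * (x ⬝ᵥ x) := by simp [Finset.sum_mul]

lemma rayleigh_mem {ι : Type*} [Fintype ι] (M : Matrix ι ι ℝ) (x : ι → ℝ) :
    (x ⬝ᵥ M.mulVec x) / (x ⬝ᵥ x) ∈ Set.Icc (-(∑ i, ∑ j, |M i j|)) (∑ i, ∑ j, |M i j|) := by
  have hC : 0 ≤ ∑ i, ∑ j, |M i j| :=
    Finset.sum_nonneg fun i _ => Finset.sum_nonneg fun j _ => abs_nonneg _
  by_cases hx : x ⬝ᵥ x = 0
  · have hnum : x = 0 := by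
      funext i
      have h := Finset.sum_eq_zero_iff_of_nonneg (f := fun k => x k * x k)
        (fun k _ => mul_self_nonneg (x k)) |>.mp hx i (Finset.mem_univ i)
      simp only [Pi.zero_apply]
      nlinarith [h]
    simp [hnum, hC]
  · have hpos : 0 < x ⬝ᵥ x := by
      rcases lt_or_eq_of_le (Finset.sum_nonneg (fun k _ => mul_self_nonneg (x k)) :
        (0:ℝ) ≤ x ⬝ᵥ x) with h | h
      · exact h
      · exact absurd h.symm hx
    have habs := abs_dot_le M x
    constructor
    · rw [le_div_iff₀ hpos]
      have := neg_abs_le (x ⬝ᵥ M.mulVec x)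
      nlinarith
    · rw [div_le_iff₀ hpos]
      nlinarith [le_abs_self (x ⬝ᵥ M.mulVec x)]


lemma sub_nonempty {ι : Type*} [Fintype ι] (U : Submodule ℝ (ι → ℝ))
    (hU : Module.finrank ℝ U = 2) : Nonempty {x : ι → ℝ // x ∈ U ∧ x ≠ 0} := by
  have : U ≠ ⊥ := by
    intro hbot
    rw [hbot] at hU
    simp at hU
  obtain ⟨x, hx, hx0⟩ := Submodule.exists_mem_ne_zero_of_ne_bot this
  exact ⟨⟨x, hx, hx0⟩⟩

lemma ray_bddAbove {ι : Type*} [Fintype ι] (M : Matrix ι ι ℝ) (U : Submodule ℝ (ι → ℝ)) :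
    BddAbove (Set.range fun x : {x : ι → ℝ // x ∈ U ∧ x ≠ 0} =>
      (x.1 ⬝ᵥ M.mulVec x.1) / (x.1 ⬝ᵥ x.1)) := by
  refine ⟨∑ i, ∑ j, |M i j|, ?_⟩
  rintro _ ⟨x, rfl⟩
  exact (rayleigh_mem M x.1).2

lemma lambda2_le {ι κ : Type*} [Fintype ι] [Fintype κ]
    (M : Matrix ι ι ℝ) (N : Matrix κ κ ℝ)
    (hne : Nonempty {U : Submodule ℝ (ι → ℝ) // Module.finrank ℝ U = 2})
    (T : (ι → ℝ) →ₗ[ℝ] (κ → ℝ)) (hT : Function.Injective T)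
    (h : ∀ x : ι → ℝ, x ≠ 0 →
      (T x ⬝ᵥ N.mulVec (T x)) / (T x ⬝ᵥ T x) ≤ (x ⬝ᵥ M.mulVec x) / (x ⬝ᵥ x)) :
    lambda2 N ≤ lambda2 M := by
  unfold lambda2
  refine le_ciInf ?_
  intro U
  show (⨅ V : {V : Submodule ℝ (κ → ℝ) // Module.finrank ℝ V = 2},
      ⨆ y : {y : κ → ℝ // y ∈ V.1 ∧ y ≠ 0}, (y.1 ⬝ᵥ N.mulVec y.1) / (y.1 ⬝ᵥ y.1))
      ≤ ⨆ x : {x : ι → ℝ // x ∈ U.1 ∧ x ≠ 0}, (x.1 ⬝ᵥ M.mulVec x.1) / (x.1 ⬝ᵥ x.1)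
  revert U
  have key : ∀ U : {U : Submodule ℝ (ι → ℝ) // Module.finrank ℝ U = 2},
      (⨅ V : {V : Submodule ℝ (κ → ℝ) // Module.finrank ℝ V = 2},
      ⨆ y : {y : κ → ℝ // y ∈ V.1 ∧ y ≠ 0}, (y.1 ⬝ᵥ N.mulVec y.1) / (y.1 ⬝ᵥ y.1))
      ≤ ⨆ x : {x : ι → ℝ // x ∈ U.1 ∧ x ≠ 0},
        (x.1 ⬝ᵥ M.mulVec x.1) / (x.1 ⬝ᵥ x.1) := by
    rintro ⟨U, hU⟩
    have hmap : Module.finrank ℝ (U.map T) = 2 := by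
      rw [← (Submodule.equivMapOfInjective T hT U).finrank_eq, hU]
    have hle : (⨆ y : {y : κ → ℝ // y ∈ U.map T ∧ y ≠ 0},
        (y.1 ⬝ᵥ N.mulVec y.1) / (y.1 ⬝ᵥ y.1))
        ≤ ⨆ x : {x : ι → ℝ // x ∈ U ∧ x ≠ 0},
          (x.1 ⬝ᵥ M.mulVec x.1) / (x.1 ⬝ᵥ x.1) := by
      have := sub_nonempty (U.map T) hmap
      refine ciSup_le ?_
      rintro ⟨y, hyU, hy0⟩
      obtain ⟨x, hxU, rfl⟩ := hyU
      have hx0 : x ≠ 0 := by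
        rintro rfl
        exact hy0 (map_zero T)
      refine le_trans (h x hx0) ?_
      exact le_ciSup (ray_bddAbove M U) ⟨x, hxU, hx0⟩
    refine le_trans ?_ hle
    refine ciInf_le ?_ (⟨U.map T, hmap⟩ : {V : Submodule ℝ (κ → ℝ) // Module.finrank ℝ V = 2})
    refine ⟨-(∑ i, ∑ j, |N i j|), ?_⟩
    rintro _ ⟨⟨V, hV⟩, rfl⟩
    have hne' := sub_nonempty V hV
    obtain ⟨x0⟩ := hne'
    refine le_trans (rayleigh_mem N x0.1).1 (le_ciSup (ray_bddAbove N V) x0)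
  exact key


lemma laplacian_psd {ι : Type*} [Fintype ι] [DecidableEq ι] (A : Matrix ι ι ℝ)
    (hsym : A.IsSymm) (hnonneg : ∀ i j, 0 ≤ A i j) (z : ι → ℝ) :
    0 ≤ z ⬝ᵥ (Matrix.diagonal (fun i => ∑ j, A i j) - A).mulVec z := by
  have hAs : ∀ i j, A j i = A i j := fun i j => by
    conv_lhs => rw [← hsym]
    rfl
  have h1 : z ⬝ᵥ (Matrix.diagonal (fun i => ∑ j, A i j) - A).mulVec z
      = (∑ i, ∑ j, z i * A i j * z i) - ∑ i, ∑ j, z i * A i j * z j := by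
    rw [Matrix.sub_mulVec, dotProduct_sub]
    congr 1
    · simp only [dotProduct, Matrix.mulVec_diagonal, Finset.mul_sum]
      refine Finset.sum_congr rfl fun i _ => ?_
      rw [Finset.sum_mul, Finset.mul_sum]
      refine Finset.sum_congr rfl fun j _ => by ring
    · simp only [dotProduct, Matrix.mulVec, Finset.mul_sum]
      refine Finset.sum_congr rfl fun i _ => Finset.sum_congr rfl fun j _ => by ring
  have h2 : ∑ i, ∑ j, A i j * z j ^ 2 = ∑ i, ∑ j, A i j * z i ^ 2 := by
    rw [Finset.sum_comm]
    refine Finset.sum_congr rfl fun i _ => Finset.sum_congr rfl fun j _ => by rw [hAs]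
  have h3 : ∑ i, ∑ j, A i j * (z i - z j) ^ 2
      = (∑ i, ∑ j, A i j * z i ^ 2) + (∑ i, ∑ j, A i j * z j ^ 2)
        - 2 * ∑ i, ∑ j, z i * A i j * z j := by
    rw [Finset.mul_sum, ← Finset.sum_add_distrib, ← Finset.sum_sub_distrib]
    refine Finset.sum_congr rfl fun i _ => ?_
    rw [Finset.mul_sum, ← Finset.sum_add_distrib, ← Finset.sum_sub_distrib]
    refine Finset.sum_congr rfl fun j _ => by ring
  have h4 : ∑ i, ∑ j, z i * A i j * z i = ∑ i, ∑ j, A i j * z i ^ 2 :=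
    Finset.sum_congr rfl fun i _ => Finset.sum_congr rfl fun j _ => by ring
  have h5 : 0 ≤ ∑ i, ∑ j, A i j * (z i - z j) ^ 2 :=
    Finset.sum_nonneg fun i _ => Finset.sum_nonneg fun j _ =>
      mul_nonneg (hnonneg i j) (sq_nonneg _)
  rw [h1]
  nlinarith [h5, h3, h2, h4]

/-- for a connected weighted graph with vertex partition `V = F ∪ C`,
the Schur complement `Sc(L,C) = C_mat - Bᵀ F⁻¹ B` of the Laplacian onto `C`,
normalized by the original degrees restricted to `C`, has second smallest eigenvalue
at least that of the normalized Laplacian of the full graph. -/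
theorem schur_complement_lambda2_lower_bound (k m : ℕ) (hm : 2 ≤ m)
    (A : Matrix (Fin k ⊕ Fin m) (Fin k ⊕ Fin m) ℝ)
    (hsym : A.IsSymm) (hnonneg : ∀ i j, 0 ≤ A i j) (hloop : ∀ i, A i i = 0)
    (hdpos : ∀ i, 0 < ∑ j, A i j)
    (L : Matrix (Fin k ⊕ Fin m) (Fin k ⊕ Fin m) ℝ)
    (hL : L = Matrix.diagonal (fun i => ∑ j, A i j) - A)
    (hconn : ∀ x : (Fin k ⊕ Fin m) → ℝ, L.mulVec x = 0 → ∃ c : ℝ, ∀ i, x i = c)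
    (hF : L.toBlocks₁₁.PosDef) :
    lambda2 (Matrix.diagonal (fun i : Fin m => (Real.sqrt (∑ j, A (Sum.inr i) j))⁻¹)
        * (L.toBlocks₂₂ - L.toBlocks₂₁ * (L.toBlocks₁₁)⁻¹ * L.toBlocks₁₂)
        * Matrix.diagonal (fun i : Fin m => (Real.sqrt (∑ j, A (Sum.inr i) j))⁻¹))
      ≥ lambda2 (Matrix.diagonal (fun i => (Real.sqrt (∑ j, A i j))⁻¹)
        * L * Matrix.diagonal (fun i => (Real.sqrt (∑ j, A i j))⁻¹)) := by
  classical
  set s : (Fin k ⊕ Fin m) → ℝ := fun i => Real.sqrt (∑ j, A i j) with hs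
  have hspos : ∀ i, 0 < s i := fun i => Real.sqrt_pos.mpr (hdpos i)
  set F := L.toBlocks₁₁ with hFdef
  set Bm := L.toBlocks₁₂ with hBmdef
  set Bt := L.toBlocks₂₁ with hBtdef
  set Cm := L.toBlocks₂₂ with hCmdef
  set S := Cm - Bt * F⁻¹ * Bm with hSdef
  set Dinv := Matrix.diagonal (fun i => (s i)⁻¹) with hDinv
  set Dcinv := Matrix.diagonal (fun i : Fin m => (s (Sum.inr i))⁻¹) with hDcinv
  -- invertibility of F
  have hFdet : IsUnit F.det := isUnit_iff_ne_zero.mpr (ne_of_gt hF.det_pos)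
  have hFF : F * F⁻¹ = 1 := Matrix.mul_nonsing_inv F hFdet
  -- the embedding matrix
  set W := Matrix.diagonal (fun a : Fin k => s (Sum.inl a)) * (-(F⁻¹ * Bm))
    * Matrix.diagonal (fun b : Fin m => (s (Sum.inr b))⁻¹) with hW
  set M0 : Matrix (Fin k ⊕ Fin m) (Fin m) ℝ :=
    Matrix.of (fun i b => Sum.elim (fun a => W a b)
      (fun b' => (1 : Matrix (Fin m) (Fin m) ℝ) b' b) i) with hM0
  set T := M0.mulVecLin with hT
  have hTx : ∀ x : Fin m → ℝ, T x = Sum.elim (W.mulVec x) x := by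
    intro x
    funext i
    cases i with
    | inl a => simp [hT, hM0, Matrix.mulVecLin_apply, Matrix.mulVec, dotProduct]
    | inr b =>
      simp [hT, hM0, Matrix.mulVecLin_apply, Matrix.mulVec, dotProduct,
        Matrix.one_apply]
  have hTinj : Function.Injective T := by
    intro x y hxy
    funext b
    have := congrFun hxy (Sum.inr b)
    rwa [hTx, hTx] at this
  have hne : Nonempty {U : Submodule ℝ (Fin m → ℝ) // Module.finrank ℝ U = 2} := by
    have hli : LinearIndependent ℝ
        (fun i : Fin 2 => Pi.basisFun ℝ (Fin m) (Fin.castLE hm i)) :=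
      (Pi.basisFun ℝ (Fin m)).linearIndependent.comp _ (Fin.castLE_injective hm)
    refine ⟨⟨Submodule.span ℝ (Set.range
      (fun i : Fin 2 => Pi.basisFun ℝ (Fin m) (Fin.castLE hm i))), ?_⟩⟩
    rw [finrank_span_eq_card hli, Fintype.card_fin]
  -- Rayleigh quotient inequality
  have hray : ∀ x : Fin m → ℝ, x ≠ 0 →
      (T x ⬝ᵥ (Dinv * L * Dinv).mulVec (T x)) / (T x ⬝ᵥ T x)
        ≤ (x ⬝ᵥ (Dcinv * S * Dcinv).mulVec x) / (x ⬝ᵥ x) := by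
    intro x hx
    set u : Fin m → ℝ := fun b => (s (Sum.inr b))⁻¹ * x b with hu
    set w : Fin k → ℝ := (-(F⁻¹ * Bm)).mulVec u with hw
    set y := T x with hy
    have hdx : (Matrix.diagonal fun b : Fin m => (s (Sum.inr b))⁻¹).mulVec x = u := by
      funext b; simp [Matrix.mulVec_diagonal, hu]
    have hWx : W.mulVec x = fun a => s (Sum.inl a) * w a := by
      funext a
      rw [hW, ← Matrix.mulVec_mulVec, ← Matrix.mulVec_mulVec, hdx,
        Matrix.mulVec_diagonal, hw]
    have hyval : y = Sum.elim (fun a => s (Sum.inl a) * w a) x := by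
      rw [hy, hTx, hWx]
    set z : (Fin k ⊕ Fin m) → ℝ := Sum.elim w u with hz
    have hzy : ∀ i, z i = (s i)⁻¹ * y i := by
      intro i
      cases i with
      | inl a =>
        rw [hyval]
        simp only [Sum.elim_inl, hz]
        rw [← mul_assoc, inv_mul_cancel₀ (ne_of_gt (hspos (Sum.inl a))), one_mul]
      | inr b => rw [hyval]; simp [hz, hu]
    -- numerator on the big side
    have hnum : y ⬝ᵥ (Dinv * L * Dinv).mulVec y = z ⬝ᵥ L.mulVec z := by
      rw [Matrix.mul_assoc, ← Matrix.mulVec_mulVec, ← Matrix.mulVec_mulVec]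
      have hDy : Dinv.mulVec y = z := by
        funext i; rw [hDinv, Matrix.mulVec_diagonal, hzy]
      rw [hDy]
      simp only [dotProduct, hDinv, Matrix.mulVec_diagonal]
      refine Finset.sum_congr rfl fun i _ => ?_
      rw [hzy i]; ring
    -- block computation
    have hLblocks : L.mulVec z = Sum.elim (F.mulVec w + Bm.mulVec u)
        (Bt.mulVec w + Cm.mulVec u) := by
      conv_lhs => rw [← Matrix.fromBlocks_toBlocks L, hz]
      rw [Matrix.fromBlocks_mulVec]
      simp only [Sum.elim_comp_inl, Sum.elim_comp_inr, ← hFdef, ← hBmdef, ← hBtdef,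
        ← hCmdef]
    have hFw : F.mulVec w = -(Bm.mulVec u) := by
      rw [hw, Matrix.neg_mulVec, Matrix.mulVec_neg, Matrix.mulVec_mulVec,
        ← Matrix.mul_assoc, hFF, Matrix.one_mul]
    have hBtw : Bt.mulVec w = -((Bt * F⁻¹ * Bm).mulVec u) := by
      rw [hw, Matrix.neg_mulVec, Matrix.mulVec_neg, Matrix.mulVec_mulVec,
        Matrix.mul_assoc]
    have hzLz : z ⬝ᵥ L.mulVec z = u ⬝ᵥ S.mulVec u := by
      rw [hLblocks, hFw]
      rw [hz, sumElim_dotProduct_sumElim]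
      rw [neg_add_cancel, dotProduct_zero, zero_add, hBtw, hSdef, Matrix.sub_mulVec,
        dotProduct_add, dotProduct_sub, dotProduct_neg]
      ring
    -- numerator on the small side
    have hnum2 : x ⬝ᵥ (Dcinv * S * Dcinv).mulVec x = u ⬝ᵥ S.mulVec u := by
      rw [Matrix.mul_assoc, ← Matrix.mulVec_mulVec, ← Matrix.mulVec_mulVec]
      have hDx : Dcinv.mulVec x = u := by
        funext b; rw [hDcinv, Matrix.mulVec_diagonal, hu]
      rw [hDx]
      simp only [dotProduct, hDcinv, Matrix.mulVec_diagonal]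
      refine Finset.sum_congr rfl fun b _ => ?_
      rw [hu]; ring
    have hq0 : 0 ≤ u ⬝ᵥ S.mulVec u := by
      rw [← hzLz, hL]
      exact laplacian_psd A hsym hnonneg z
    -- denominators
    have hxx : 0 < x ⬝ᵥ x := by
      have h1 : (0:ℝ) ≤ x ⬝ᵥ x := Finset.sum_nonneg fun i _ => mul_self_nonneg (x i)
      have h2 : x ⬝ᵥ x ≠ 0 := fun h => hx (dotProduct_self_eq_zero.mp h)
      exact h1.lt_of_ne (Ne.symm h2)
    have hyy : x ⬝ᵥ x ≤ y ⬝ᵥ y := by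
      rw [hyval]
      rw [sumElim_dotProduct_sumElim]
      have : (0:ℝ) ≤ (fun a => s (Sum.inl a) * w a) ⬝ᵥ (fun a => s (Sum.inl a) * w a) :=
        Finset.sum_nonneg fun a _ => mul_self_nonneg _
      linarith
    have hyypos : 0 < y ⬝ᵥ y := lt_of_lt_of_le hxx hyy
    rw [hnum, hzLz, hnum2, div_le_div_iff₀ hyypos hxx]
    exact mul_le_mul_of_nonneg_left hyy hq0
  exact lambda2_le (Dcinv * S * Dcinv) (Dinv * L * Dinv) hne T hTinj hray
end

section
/- For symmetric PSD matrices S and diagonal matrices D_S ⪯ D_C with positive diagonals, λ₂(D_S^{-1/2} S D_S^{-1/2}) >= λ₂(D_C^{-1/2} S D_C^{-1/2}). -/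
/-!
With `c = √d_C / √d_S ≥ 1`, the substitution `y = c • x` turns the quadratic form of
`D_S^{-1/2} S D_S^{-1/2}` at `x` into that of `D_C^{-1/2} S D_C^{-1/2}` at `y`, while
`‖y‖² ≥ ‖x‖²`; since the numerator is nonnegative (`S ⪰ 0`), the Rayleigh quotient can only
drop. The bijection `x ↦ c • x` maps 2-dimensional subspaces onto 2-dimensional subspaces, so
every max in the min-max for `D_S` dominates one for `D_C`.
-/

open Matrix BigOperators

section Rayleigh

variable {ι : Type*} [Fintype ι]

noncomputable def rayleigh (M : Matrix ι ι ℝ) (x : ι → ℝ) : ℝ :=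
  (x ⬝ᵥ M *ᵥ x) / (x ⬝ᵥ x)

theorem lambda2_eq_iInf_iSup_rayleigh (M : Matrix ι ι ℝ) :
    lambda2 M = ⨅ U : {U : Submodule ℝ (ι → ℝ) // Module.finrank ℝ U = 2},
      ⨆ x : {x : ι → ℝ // x ∈ U.1 ∧ x ≠ 0}, rayleigh M x.1 :=
  rfl

theorem abs_mul_le_dotProduct_self (x : ι → ℝ) (i j : ι) : |x i * x j| ≤ x ⬝ᵥ x := by
  have hi : x i * x i ≤ x ⬝ᵥ x :=
    Finset.single_le_sum (fun k _ => mul_self_nonneg (x k)) (Finset.mem_univ i)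
  have hj : x j * x j ≤ x ⬝ᵥ x :=
    Finset.single_le_sum (fun k _ => mul_self_nonneg (x k)) (Finset.mem_univ j)
  rw [abs_mul]
  nlinarith [sq_nonneg (|x i| - |x j|), abs_mul_abs_self (x i), abs_mul_abs_self (x j)]

theorem abs_dotProduct_mulVec_le (M : Matrix ι ι ℝ) (x : ι → ℝ) :
    |x ⬝ᵥ M *ᵥ x| ≤ (∑ i, ∑ j, |M i j|) * (x ⬝ᵥ x) := by
  calc |x ⬝ᵥ M *ᵥ x| = |∑ i, ∑ j, M i j * (x i * x j)| := by
        simp only [dotProduct, mulVec, Finset.mul_sum]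
        congr 1
        exact Finset.sum_congr rfl fun i _ => Finset.sum_congr rfl fun j _ => by ring
    _ ≤ ∑ i, ∑ j, |M i j| * |x i * x j| := by
        refine (Finset.abs_sum_le_sum_abs _ _).trans (Finset.sum_le_sum fun i _ => ?_)
        refine (Finset.abs_sum_le_sum_abs _ _).trans_eq ?_
        simp only [abs_mul]
    _ ≤ ∑ i, ∑ j, |M i j| * (x ⬝ᵥ x) := by
        gcongr with i _ j _
        exact abs_mul_le_dotProduct_self x i j
    _ = (∑ i, ∑ j, |M i j|) * (x ⬝ᵥ x) := by simp only [Finset.sum_mul]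

-- `⨆` and `⨅` over unbounded families of reals are junk (`0`), so the min-max comparison
-- needs this uniform bound.
theorem abs_rayleigh_le (M : Matrix ι ι ℝ) (x : ι → ℝ) :
    |rayleigh M x| ≤ ∑ i, ∑ j, |M i j| := by
  rcases eq_or_ne x 0 with rfl | hx
  · simp [rayleigh, Finset.sum_nonneg]
  have hpos : 0 < x ⬝ᵥ x := (dotProduct_self_star_nonneg x).lt_of_ne' (by simpa using hx)
  rw [rayleigh, abs_div, abs_of_pos hpos, div_le_iff₀ hpos]
  exact abs_dotProduct_mulVec_le M x

theorem nonempty_ne_zero_of_finrank_eq_two {U : Submodule ℝ (ι → ℝ)}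
    (hU : Module.finrank ℝ U = 2) : Nonempty {x : ι → ℝ // x ∈ U ∧ x ≠ 0} := by
  obtain ⟨x, hx, hx0⟩ := U.exists_mem_ne_zero_of_ne_bot (Submodule.one_le_finrank_iff.1 (by omega))
  exact ⟨⟨x, hx, hx0⟩⟩

theorem dotProduct_self_le_of_one_le {c : ι → ℝ} (hc : ∀ i, 1 ≤ c i) (x : ι → ℝ) :
    x ⬝ᵥ x ≤ (c * x) ⬝ᵥ (c * x) :=
  Finset.sum_le_sum fun i _ => by
    have hc2 : 1 ≤ c i * c i := one_le_mul_of_one_le_of_one_le (hc i) (hc i)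
    simp only [Pi.mul_apply]
    nlinarith [mul_le_mul_of_nonneg_right hc2 (mul_self_nonneg (x i))]

theorem bddAbove_range_rayleigh {α : Type*} (M : Matrix ι ι ℝ) (f : α → ι → ℝ) :
    BddAbove (Set.range fun a => rayleigh M (f a)) :=
  ⟨_, by rintro _ ⟨a, rfl⟩; exact (le_abs_self _).trans (abs_rayleigh_le M (f a))⟩

theorem neg_le_iSup_rayleigh (M : Matrix ι ι ℝ) {U : Submodule ℝ (ι → ℝ)}
    (hU : Module.finrank ℝ U = 2) :
    -∑ i, ∑ j, |M i j| ≤ ⨆ x : {x : ι → ℝ // x ∈ U ∧ x ≠ 0}, rayleigh M x.1 := by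
  obtain ⟨x⟩ := nonempty_ne_zero_of_finrank_eq_two hU
  exact le_ciSup_of_le (bddAbove_range_rayleigh M _) x (neg_le_of_abs_le (abs_rayleigh_le M x.1))

theorem lambda2_le_lambda2_of_rayleigh_le {A B : Matrix ι ι ℝ} (e : (ι → ℝ) ≃ₗ[ℝ] (ι → ℝ))
    (h : ∀ x ≠ 0, rayleigh B (e x) ≤ rayleigh A x) : lambda2 B ≤ lambda2 A := by
  rw [lambda2_eq_iInf_iSup_rayleigh, lambda2_eq_iInf_iSup_rayleigh]
  cases isEmpty_or_nonempty {U : Submodule ℝ (ι → ℝ) // Module.finrank ℝ U = 2}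
  · simp only [iInf_of_isEmpty, le_refl]
  have hbdd : BddBelow (Set.range fun U : {U : Submodule ℝ (ι → ℝ) // Module.finrank ℝ U = 2} =>
      ⨆ x : {x : ι → ℝ // x ∈ U.1 ∧ x ≠ 0}, rayleigh B x.1) :=
    ⟨_, by rintro _ ⟨U, rfl⟩; exact neg_le_iSup_rayleigh B U.2⟩
  refine le_ciInf fun U => ?_
  have heU : Module.finrank ℝ (U.1.map (e : (ι → ℝ) →ₗ[ℝ] (ι → ℝ))) = 2 := by
    rw [LinearEquiv.finrank_map_eq]; exact U.2
  have := nonempty_ne_zero_of_finrank_eq_two heU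
  refine (ciInf_le hbdd ⟨_, heU⟩).trans ?_
  refine ciSup_le fun ⟨y, hy, hy0⟩ => ?_
  obtain ⟨x, hx, rfl⟩ := Submodule.mem_map.1 hy
  have hx0 : x ≠ 0 := fun h0 => hy0 (by rw [h0, map_zero])
  exact le_ciSup_of_le (bddAbove_range_rayleigh A _) ⟨x, hx, hx0⟩ (h x hx0)

end Rayleigh

section DiagonalCongruence

variable {ι : Type*} [Fintype ι] [DecidableEq ι]

theorem dotProduct_diagonal_mul_mul_diagonal_mulVec (d : ι → ℝ) (M : Matrix ι ι ℝ) (x : ι → ℝ) :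
    x ⬝ᵥ (diagonal d * M * diagonal d) *ᵥ x = (d * x) ⬝ᵥ M *ᵥ (d * x) := by
  have hd : diagonal d *ᵥ x = d * x := funext fun i => mulVec_diagonal d x i
  have hd' : x ᵥ* diagonal d = d * x := funext fun i => (vecMul_diagonal x d i).trans (mul_comm _ _)
  rw [← mulVec_mulVec, ← mulVec_mulVec, dotProduct_mulVec, hd, hd']

theorem rayleigh_diagonal_mul_mul_diagonal_le {S : Matrix ι ι ℝ} (hS : S.PosSemidef)
    {a b : ι → ℝ} (hb : ∀ i, 0 < b i) (hba : ∀ i, b i ≤ a i) {x : ι → ℝ} (hx : x ≠ 0) :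
    rayleigh (diagonal b * S * diagonal b) ((a / b) * x)
      ≤ rayleigh (diagonal a * S * diagonal a) x := by
  have hscale : b * ((a / b) * x) = a * x := by
    ext i; simp only [Pi.mul_apply, Pi.div_apply]; field_simp [(hb i).ne']
  rw [rayleigh, rayleigh, dotProduct_diagonal_mul_mul_diagonal_mulVec,
    dotProduct_diagonal_mul_mul_diagonal_mulVec, hscale]
  refine div_le_div_of_nonneg_left ?_ ?_ (dotProduct_self_le_of_one_le (fun i => ?_) x)
  · simpa using hS.dotProduct_mulVec_nonneg (a * x)
  · exact (dotProduct_self_star_nonneg x).lt_of_ne' (by simpa using hx)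
  · exact (one_le_div (hb i)).2 (hba i)

theorem lambda2_diagonal_mul_mul_diagonal_le {S : Matrix ι ι ℝ} (hS : S.PosSemidef)
    {a b : ι → ℝ} (hb : ∀ i, 0 < b i) (hba : ∀ i, b i ≤ a i) :
    lambda2 (diagonal b * S * diagonal b) ≤ lambda2 (diagonal a * S * diagonal a) :=
  lambda2_le_lambda2_of_rayleigh_le
    (LinearEquiv.piCongrRight fun i =>
      LinearEquiv.smulOfNeZero ℝ ℝ (a i / b i) (div_pos ((hb i).trans_le (hba i)) (hb i)).ne')
    fun _ hx => rayleigh_diagonal_mul_mul_diagonal_le hS hb hba hx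

end DiagonalCongruence

/-- for a symmetric PSD matrix `S` and diagonal matrices with positive
diagonals `D_S ⪯ D_C` (entrywise on the diagonal),
`λ₂(D_S^{-1/2} S D_S^{-1/2}) ≥ λ₂(D_C^{-1/2} S D_C^{-1/2})`. -/
theorem lambda2_monotone_in_normalization (n : ℕ)
    (S : Matrix (Fin n) (Fin n) ℝ) (hS : S.PosSemidef)
    (dS dC : Fin n → ℝ) (hdS : ∀ i, 0 < dS i) (hdC : ∀ i, 0 < dC i)
    (hle : ∀ i, dS i ≤ dC i) :
    lambda2 (Matrix.diagonal (fun i => (Real.sqrt (dS i))⁻¹) * S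
        * Matrix.diagonal (fun i => (Real.sqrt (dS i))⁻¹))
      ≥ lambda2 (Matrix.diagonal (fun i => (Real.sqrt (dC i))⁻¹) * S
        * Matrix.diagonal (fun i => (Real.sqrt (dC i))⁻¹)) :=
  lambda2_diagonal_mul_mul_diagonal_le hS (fun i => inv_pos.2 (Real.sqrt_pos.2 (hdC i)))
    fun i => inv_anti₀ (Real.sqrt_pos.2 (hdS i)) (Real.sqrt_le_sqrt (hle i))
end

section
/- If M is a (1+α)-diagonally dominant symmetric matrix with nonpositive off-diagonal entries arising as a principal submatrix of a Laplacian, and L_M is its completion to a Laplacian by adding one vertex x, then the second smallest eigenvalue of the normalized Schur complement of L_M onto the original vertices is at least α/(1+α). -/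
/-!
Write `b = M *ᵥ 1` and `c = ∑ b`, so that `S = M - c⁻¹ b bᵀ`. The quadratic form of `L_M` at
`(y, s)` is `(y - s𝟙)ᵀ M (y - s𝟙)`; minimising over `s` shows `yᵀ S y = zᵀ M z` for
`z = y - (bᵀy / c) 𝟙`. Since `M - diag b` is a Laplacian, `zᵀ M z ≥ ∑ b_u z_u²`, and
`(1+α)`-dominance gives `b_u ≥ α/(1+α) M_uu ≥ α/(1+α) S_uu`. If `y` is orthogonal to `𝟙` in
the weights `S_uu`, shifting it by a constant only increases `∑ S_uu y_u²`, so
`yᵀ S y ≥ α/(1+α) ∑ S_uu y_u²` there. After the substitution `x = D^{1/2} y` this bounds the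
Rayleigh quotient of `D^{-1/2} S D^{-1/2}` on a hyperplane, which meets every plane.
-/

open Matrix BigOperators

namespace Matrix

variable {ι : Type*}

lemma sub_smul_vecMulVec_apply_self (M : Matrix ι ι ℝ) (b : ι → ℝ) (c : ℝ) (u : ι) :
    (M - c⁻¹ • vecMulVec b b) u u = M u u - b u ^ 2 / c := by
  simp only [sub_apply, smul_apply, vecMulVec_apply, smul_eq_mul]
  ring

variable [Fintype ι]

lemma dotProduct_mulVec_eq_sum_sum (A : Matrix ι ι ℝ) (x y : ι → ℝ) :
    x ⬝ᵥ A *ᵥ y = ∑ u, ∑ v, x u * A u v * y v := by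
  simp only [dotProduct, mulVec, Finset.mul_sum, mul_assoc]

lemma mulVec_one_apply (A : Matrix ι ι ℝ) (u : ι) : (A *ᵥ 1) u = ∑ v, A u v := by
  simp [mulVec, dotProduct]

lemma dotProduct_mulVec_le_sum_abs_mul (A : Matrix ι ι ℝ) (x : ι → ℝ) :
    x ⬝ᵥ A *ᵥ x ≤ (∑ u, ∑ v, |A u v|) * (x ⬝ᵥ x) := by
  have hcoord : ∀ u, x u * x u ≤ x ⬝ᵥ x := fun u =>
    Finset.single_le_sum (f := fun i => x i * x i) (fun i _ => mul_self_nonneg _)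
      (Finset.mem_univ u)
  have hterm : ∀ u v, x u * A u v * x v ≤ |A u v| * (x ⬝ᵥ x) := fun u v =>
    calc x u * A u v * x v ≤ |A u v| * (|x u| * |x v|) := by
          rw [← abs_mul, ← abs_mul]; exact (le_abs_self _).trans_eq (by ring_nf)
      _ ≤ |A u v| * (x ⬝ᵥ x) := by
          gcongr
          nlinarith [hcoord u, hcoord v, sq_abs (x u), sq_abs (x v), sq_nonneg (|x u| - |x v|)]
  rw [dotProduct_mulVec_eq_sum_sum, Finset.sum_mul]
  exact Finset.sum_le_sum fun u _ =>
    (Finset.sum_le_sum fun v _ => hterm u v).trans_eq (Finset.sum_mul ..).symm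

lemma bddAbove_rayleigh (A : Matrix ι ι ℝ) (U : Submodule ℝ (ι → ℝ)) :
    BddAbove (Set.range fun x : {x : ι → ℝ // x ∈ U ∧ x ≠ 0} =>
      (x.1 ⬝ᵥ A *ᵥ x.1) / (x.1 ⬝ᵥ x.1)) := by
  refine ⟨∑ u, ∑ v, |A u v|, ?_⟩
  rintro _ ⟨⟨x, -, hx⟩, rfl⟩
  have hxx : 0 < x ⬝ᵥ x := by simpa using dotProduct_self_star_pos_iff.mpr hx
  exact (div_le_iff₀ hxx).mpr (dotProduct_mulVec_le_sum_abs_mul A x)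

lemma exists_finrank_eq_two (h : 2 ≤ Fintype.card ι) :
    ∃ U : Submodule ℝ (ι → ℝ), Module.finrank ℝ U = 2 := by
  obtain ⟨f, hf⟩ := exists_linearIndependent_of_le_finrank (R := ℝ) (M := ι → ℝ) (n := 2)
    (by rwa [Module.finrank_fintype_fun_eq_card])
  exact ⟨Submodule.span ℝ (Set.range f), by simp [finrank_span_eq_card hf]⟩

lemma exists_mem_ne_zero_dotProduct_eq_zero (w : ι → ℝ) {U : Submodule ℝ (ι → ℝ)}
    (hU : Module.finrank ℝ U = 2) : ∃ x ∈ U, x ≠ 0 ∧ w ⬝ᵥ x = 0 := by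
  let φ : U →ₗ[ℝ] ℝ := (dotProductBilin ℝ ℝ w).comp U.subtype
  have hker : LinearMap.ker φ ≠ ⊥ := φ.ker_ne_bot_of_finrank_lt (by simp [hU])
  obtain ⟨x, hx, hx0⟩ := Submodule.exists_mem_ne_zero_of_ne_bot hker
  exact ⟨x, x.2, by simpa using hx0, by simpa [φ] using hx⟩

lemma le_lambda2_of_forall_dotProduct_eq_zero (A : Matrix ι ι ℝ) (h : 2 ≤ Fintype.card ι)
    (w : ι → ℝ) {κ : ℝ}
    (hw : ∀ x, x ≠ 0 → w ⬝ᵥ x = 0 → κ ≤ (x ⬝ᵥ A *ᵥ x) / (x ⬝ᵥ x)) :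
    κ ≤ lambda2 A := by
  obtain ⟨U₀, hU₀⟩ := exists_finrank_eq_two h
  have : Nonempty {U : Submodule ℝ (ι → ℝ) // Module.finrank ℝ U = 2} := ⟨⟨U₀, hU₀⟩⟩
  refine le_ciInf fun ⟨U, hU⟩ => ?_
  obtain ⟨x, hxU, hx0, hwx⟩ := exists_mem_ne_zero_dotProduct_eq_zero w hU
  exact (hw x hx0 hwx).trans (le_ciSup (bddAbove_rayleigh A U) ⟨x, hxU, hx0⟩)

lemma dotProduct_diagonal_mul_mul_diagonal_mulVec [DecidableEq ι] (S : Matrix ι ι ℝ)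
    (f x : ι → ℝ) :
    x ⬝ᵥ (diagonal f * S * diagonal f) *ᵥ x = (diagonal f *ᵥ x) ⬝ᵥ S *ᵥ (diagonal f *ᵥ x) := by
  rw [← mulVec_mulVec, ← mulVec_mulVec, dotProduct_mulVec, ← mulVec_transpose,
    diagonal_transpose]

lemma le_lambda2_of_weighted_poincare [DecidableEq ι] (S : Matrix ι ι ℝ)
    (h : 2 ≤ Fintype.card ι) (hd : ∀ u, 0 < S u u) {κ : ℝ}
    (hS : ∀ y, ∑ u, S u u * y u = 0 → κ * ∑ u, S u u * y u ^ 2 ≤ y ⬝ᵥ S *ᵥ y) :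
    κ ≤ lambda2 (diagonal (fun u => (√(S u u))⁻¹) * S * diagonal (fun u => (√(S u u))⁻¹)) := by
  refine le_lambda2_of_forall_dotProduct_eq_zero _ h (fun u => √(S u u)) fun x hx hwx => ?_
  have hsq : ∀ u, √(S u u) ^ 2 = S u u := fun u => Real.sq_sqrt (hd u).le
  have hsqrt : ∀ u, √(S u u) ≠ 0 := fun u => (Real.sqrt_pos.mpr (hd u)).ne'
  set y := diagonal (fun u => (√(S u u))⁻¹) *ᵥ x
  have hy : ∀ u, S u u * y u = √(S u u) * x u := fun u => by
    simp only [y, mulVec_diagonal]; field_simp [hsqrt u]; linear_combination -x u * hsq u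
  have hy2 : ∀ u, S u u * y u ^ 2 = x u * x u := fun u => by
    simp only [y, mulVec_diagonal]; field_simp [hsqrt u]; linear_combination -x u ^ 2 * hsq u
  have hxx : 0 < x ⬝ᵥ x := by simpa using dotProduct_self_star_pos_iff.mpr hx
  rw [le_div_iff₀ hxx, dotProduct_diagonal_mul_mul_diagonal_mulVec]
  calc κ * (x ⬝ᵥ x) = κ * ∑ u, S u u * y u ^ 2 := by simp only [hy2, dotProduct]
    _ ≤ y ⬝ᵥ S *ᵥ y := hS y (by simpa only [hy, dotProduct] using hwx)

lemma mulVec_one_apply_eq_diag_sub_sum_abs [DecidableEq ι] {M : Matrix ι ι ℝ}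
    (hoff : ∀ u v, u ≠ v → M u v ≤ 0) (u : ι) :
    (M *ᵥ 1) u = M u u - ∑ v ∈ Finset.univ.erase u, |M u v| := by
  have habs : ∑ v ∈ Finset.univ.erase u, |M u v| = -∑ v ∈ Finset.univ.erase u, M u v := by
    rw [← Finset.sum_neg_distrib]
    exact Finset.sum_congr rfl fun v hv =>
      abs_of_nonpos (hoff u v (Finset.ne_of_mem_erase hv).symm)
  rw [mulVec_one_apply, habs, ← Finset.add_sum_erase _ _ (Finset.mem_univ u)]
  ring

lemma mulVec_one_apply_le_diag [DecidableEq ι] {M : Matrix ι ι ℝ}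
    (hoff : ∀ u v, u ≠ v → M u v ≤ 0) (u : ι) : (M *ᵥ 1) u ≤ M u u := by
  rw [mulVec_one_apply_eq_diag_sub_sum_abs hoff]
  linarith [Finset.sum_nonneg fun v (_ : v ∈ Finset.univ.erase u) => abs_nonneg (M u v)]

lemma div_mul_diag_le_mulVec_one_apply [DecidableEq ι] {M : Matrix ι ι ℝ}
    (hoff : ∀ u v, u ≠ v → M u v ≤ 0) {α : ℝ} (hα : 0 < α) {u : ι}
    (hdd : (1 + α) * ∑ v ∈ Finset.univ.erase u, |M u v| ≤ M u u) :
    α / (1 + α) * M u u ≤ (M *ᵥ 1) u := by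
  rw [mulVec_one_apply_eq_diag_sub_sum_abs hoff, div_mul_eq_mul_div, div_le_iff₀ (by linarith)]
  linarith

lemma sum_mulVec_one_mul_sq_le_dotProduct_mulVec {M : Matrix ι ι ℝ} (hsym : M.IsSymm)
    (hoff : ∀ u v, u ≠ v → M u v ≤ 0) (y : ι → ℝ) :
    ∑ u, (M *ᵥ 1) u * y u ^ 2 ≤ y ⬝ᵥ M *ᵥ y := by
  have hdiff : ∑ u, ∑ v, M u v * (y u - y v) ^ 2
      = 2 * (∑ u, (M *ᵥ 1) u * y u ^ 2 - y ⬝ᵥ M *ᵥ y) := by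
    have hexp : ∀ u v, M u v * (y u - y v) ^ 2
        = M u v * y u ^ 2 - 2 * (y u * M u v * y v) + M v u * y v ^ 2 := fun u v => by
      rw [hsym.apply u v]; ring
    simp only [hexp, Finset.sum_add_distrib, Finset.sum_sub_distrib, ← Finset.mul_sum,
      Finset.sum_comm (f := fun u v => M v u * y v ^ 2), mulVec_one_apply, Finset.sum_mul,
      dotProduct_mulVec_eq_sum_sum]
    ring
  have hnonpos : ∑ u, ∑ v, M u v * (y u - y v) ^ 2 ≤ 0 :=
    Finset.sum_nonpos fun u _ => Finset.sum_nonpos fun v _ => by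
      rcases eq_or_ne u v with rfl | huv
      · simp
      · exact mul_nonpos_of_nonpos_of_nonneg (hoff u v huv) (sq_nonneg _)
  linarith

lemma dotProduct_sub_vecMulVec_mulVec {M : Matrix ι ι ℝ} (hsym : M.IsSymm) {b : ι → ℝ}
    (hb : M *ᵥ 1 = b) {c : ℝ} (hc : c = ∑ u, b u) (hc0 : c ≠ 0) (y : ι → ℝ) :
    y ⬝ᵥ (M - c⁻¹ • vecMulVec b b) *ᵥ y
      = (y - (b ⬝ᵥ y / c) • 1) ⬝ᵥ M *ᵥ (y - (b ⬝ᵥ y / c) • 1) := by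
  have hb' : 1 ᵥ* M = b := by rw [← mulVec_transpose, hsym.eq, hb]
  have h1 : 1 ⬝ᵥ M *ᵥ y = b ⬝ᵥ y := by rw [dotProduct_mulVec, hb']
  have h2 : y ⬝ᵥ b = b ⬝ᵥ y := dotProduct_comm _ _
  have h3 : 1 ⬝ᵥ b = c := by rw [one_dotProduct, hc]
  simp only [sub_mulVec, smul_mulVec, mulVec_sub, mulVec_smul, dotProduct_sub, sub_dotProduct,
    dotProduct_smul, smul_dotProduct, vecMulVec_mulVec, hb, h1, h2, h3, op_smul_eq_smul,
    smul_eq_mul]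
  field_simp
  ring

lemma sum_mul_sq_le_sum_mul_sub_sq {d y : ι → ℝ} (hd : ∀ u, 0 ≤ d u)
    (hdy : ∑ u, d u * y u = 0) (t : ℝ) :
    ∑ u, d u * y u ^ 2 ≤ ∑ u, d u * (y u - t) ^ 2 := by
  have hexp : ∑ u, d u * (y u - t) ^ 2
      = ∑ u, d u * y u ^ 2 - 2 * t * ∑ u, d u * y u + t ^ 2 * ∑ u, d u := by
    simp only [Finset.mul_sum, ← Finset.sum_sub_distrib, ← Finset.sum_add_distrib]
    exact Finset.sum_congr rfl fun u _ => by ring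
  rw [hexp, hdy]
  nlinarith [Finset.sum_nonneg fun u (_ : u ∈ Finset.univ) => hd u, sq_nonneg t]

lemma schur_weighted_poincare {M : Matrix ι ι ℝ} (hsym : M.IsSymm)
    (hoff : ∀ u v, u ≠ v → M u v ≤ 0) {b : ι → ℝ} (hb : M *ᵥ 1 = b) {c : ℝ}
    (hc : c = ∑ u, b u) (hc0 : 0 < c) {S : Matrix ι ι ℝ} (hS : S = M - c⁻¹ • vecMulVec b b)
    (hSdiag : ∀ u, 0 ≤ S u u) {κ : ℝ} (hκ : 0 ≤ κ) (hκb : ∀ u, κ * M u u ≤ b u)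
    (y : ι → ℝ) (hy : ∑ u, S u u * y u = 0) :
    κ * ∑ u, S u u * y u ^ 2 ≤ y ⬝ᵥ S *ᵥ y := by
  set z := y - (b ⬝ᵥ y / c) • 1
  have hSM : ∀ u, S u u ≤ M u u := fun u => by
    rw [hS, sub_smul_vecMulVec_apply_self]
    linarith [div_nonneg (sq_nonneg (b u)) hc0.le]
  calc κ * ∑ u, S u u * y u ^ 2 ≤ κ * ∑ u, S u u * z u ^ 2 :=
        mul_le_mul_of_nonneg_left
          (by simpa [z] using sum_mul_sq_le_sum_mul_sub_sq hSdiag hy (b ⬝ᵥ y / c)) hκ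
    _ = ∑ u, (κ * S u u) * z u ^ 2 := by simp only [Finset.mul_sum, mul_assoc]
    _ ≤ ∑ u, b u * z u ^ 2 := Finset.sum_le_sum fun u _ =>
        mul_le_mul_of_nonneg_right ((mul_le_mul_of_nonneg_left (hSM u) hκ).trans (hκb u))
          (sq_nonneg _)
    _ ≤ z ⬝ᵥ M *ᵥ z := hb ▸ sum_mulVec_one_mul_sq_le_dotProduct_mulVec hsym hoff z
    _ = y ⬝ᵥ S *ᵥ y := (hS ▸ dotProduct_sub_vecMulVec_mulVec hsym hb hc hc0.ne' y).symm

end Matrix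

/-- if `M` is a `(1+α)`-diagonally dominant symmetric matrix with
nonpositive off-diagonal entries (a principal submatrix of a Laplacian, positive
diagonal), and `L_M` is its completion to a Laplacian by a single new vertex `x`
(with row sums zero), then the Schur complement `S = M - (1/c) b bᵀ` of `L_M`
eliminating `x` (where `b_u = ∑_v M_{uv}` and `c = ∑_u b_u`), normalized by its
own diagonal degrees, has second smallest eigenvalue at least `α/(1+α)`. -/
theorem dd_schur_complement_expansion (n : ℕ) (hn : 2 ≤ n) (α : ℝ) (hα : 0 < α)
    (M : Matrix (Fin n) (Fin n) ℝ) (hsym : M.IsSymm)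
    (hoff : ∀ u v, u ≠ v → M u v ≤ 0)
    (hdiagpos : ∀ u, 0 < M u u)
    (hdd : ∀ u, (1 + α) * ∑ v ∈ Finset.univ.erase u, |M u v| ≤ M u u)
    (b : Fin n → ℝ) (hb : b = fun u => ∑ v, M u v)
    (c : ℝ) (hc : c = ∑ u, b u)
    (S : Matrix (Fin n) (Fin n) ℝ)
    (hS : S = M - c⁻¹ • Matrix.vecMulVec b b) :
    lambda2 (Matrix.diagonal (fun u => (Real.sqrt (S u u))⁻¹) * S
        * Matrix.diagonal (fun u => (Real.sqrt (S u u))⁻¹))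
      ≥ α / (1 + α) := by
  have hcard : 2 ≤ Fintype.card (Fin n) := by rwa [Fintype.card_fin]
  have hMb : M *ᵥ 1 = b := by rw [hb]; exact funext (mulVec_one_apply M)
  have hκb : ∀ u, α / (1 + α) * M u u ≤ b u := fun u =>
    hMb ▸ div_mul_diag_le_mulVec_one_apply hoff hα (hdd u)
  have hbpos : ∀ u, 0 < b u := fun u =>
    (mul_pos (div_pos hα (by linarith)) (hdiagpos u)).trans_le (hκb u)
  have hbc : ∀ u, b u < c := fun u => by
    obtain ⟨v, hvu⟩ := Fintype.exists_ne_of_one_lt_card hcard u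
    exact hc ▸ Finset.single_lt_sum hvu (Finset.mem_univ u) (Finset.mem_univ v) (hbpos v)
      fun w _ _ => (hbpos w).le
  have hc0 : 0 < c := (hbpos ⟨0, by omega⟩).trans (hbc _)
  have hSpos : ∀ u, 0 < S u u := fun u => by
    have hbM := hMb ▸ mulVec_one_apply_le_diag hoff u
    have hsq : b u ^ 2 / c < b u := by
      rw [div_lt_iff₀ hc0, sq]; exact mul_lt_mul_of_pos_left (hbc u) (hbpos u)
    rw [hS, sub_smul_vecMulVec_apply_self]
    linarith
  exact le_lambda2_of_weighted_poincare S hcard hSpos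
    (schur_weighted_poincare hsym hoff hMb hc hc0 hS (fun u => (hSpos u).le)
      (div_pos hα (by linarith)).le hκb)
end
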